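/- arXiv:2003.04782 — 3 statements merged into one kernel-verified Lean document; each statement's English description precedes it below -/
import Mathlib

section
/- Let f be a measurable function on a set Q of finite positive measure and let m_f(Q) be any median of f on Q. Then for every 0 < λ < 1/2, |m_f(Q)| ≤ (fχ_Q)*(λ|Q|). -/
open MeasureTheory ENNReal

noncomputable section

/-- The decreasing rearrangement of `f` with respect to a measure `μ`:
`f*(t) = inf {α ≥ 0 : μ{|f| > α} ≤ t}`, with `inf ∅ = ∞`. -/
def rearrangement {α : Type*} [MeasurableSpace α] (μ : Measure α) (f : α → ℝ)
    (t : ℝ≥0∞) : ℝ≥0∞ :=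
  sInf {a : ℝ≥0∞ | μ {x | a < ENNReal.ofReal |f x|} ≤ t}

/-!
If `|f| ≥ |m|` held on at most half of `Q`, then `|f| < |m|` would hold on more than half of `Q`,
and according to the sign of `m` either `f < m` or `f > m` would, contradicting that `m` is a
median. So `|f| ≥ |m|` on a set of measure at least `|Q|/2 > λ|Q|`, which forces
`(fχ_Q)*(λ|Q|) ≥ |m|`.
-/

section

variable {α : Type*} [MeasurableSpace α] {μ : Measure α}

theorem le_rearrangement_of_lt_measure {f : α → ℝ} {t c : ℝ≥0∞}
    (h : t < μ {x | c ≤ ENNReal.ofReal |f x|}) : c ≤ rearrangement μ f t :=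
  le_sInf fun _ ha => le_of_not_gt fun hac =>
    h.not_ge <| (measure_mono fun _ hx => hac.trans_le hx).trans ha

variable {Q : Set α} {f : α → ℝ} {m : ℝ}

theorem measure_abs_lt_abs_median_le (hm_gt : μ {x | x ∈ Q ∧ m < f x} ≤ μ Q / 2)
    (hm_lt : μ {x | x ∈ Q ∧ f x < m} ≤ μ Q / 2) :
    μ {x | x ∈ Q ∧ |f x| < |m|} ≤ μ Q / 2 := by
  rcases le_or_gt 0 m with hm | hm
  · refine (measure_mono ?_).trans hm_lt
    rintro x ⟨hxQ, hx⟩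
    exact ⟨hxQ, (le_abs_self _).trans_lt (abs_of_nonneg hm ▸ hx)⟩
  · refine (measure_mono ?_).trans hm_gt
    rintro x ⟨hxQ, hx⟩
    exact ⟨hxQ, by linarith [neg_abs_le (f x), abs_of_neg hm ▸ hx]⟩

theorem half_measure_le_measure_abs_median_le (hQ : μ Q ≠ ∞)
    (hm_gt : μ {x | x ∈ Q ∧ m < f x} ≤ μ Q / 2)
    (hm_lt : μ {x | x ∈ Q ∧ f x < m} ≤ μ Q / 2) :
    μ Q / 2 ≤ μ {x | x ∈ Q ∧ |m| ≤ |f x|} := by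
  have hcover : Q ⊆ {x | x ∈ Q ∧ |m| ≤ |f x|} ∪ {x | x ∈ Q ∧ |f x| < |m|} := fun x hx =>
    (le_or_gt |m| |f x|).imp (fun h => ⟨hx, h⟩) (fun h => ⟨hx, h⟩)
  have hQ_le : μ Q ≤ μ {x | x ∈ Q ∧ |m| ≤ |f x|} + μ Q / 2 :=
    (measure_mono hcover).trans <| (measure_union_le _ _).trans <|
      by gcongr; exact measure_abs_lt_abs_median_le hm_gt hm_lt
  calc μ Q / 2 = μ Q - μ Q / 2 := (ENNReal.sub_half hQ).symm
    _ ≤ μ {x | x ∈ Q ∧ |m| ≤ |f x|} := tsub_le_iff_right.mpr hQ_le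

end

theorem ENNReal.ofReal_mul_lt_half {lam : ℝ} (hlam : lam < 1 / 2) {a : ℝ≥0∞} (ha0 : a ≠ 0)
    (ha : a ≠ ∞) : ENNReal.ofReal lam * a < a / 2 := by
  calc ENNReal.ofReal lam * a < ENNReal.ofReal (1 / 2) * a :=
        ENNReal.mul_lt_mul_left ha0 ha <| (ENNReal.ofReal_lt_ofReal_iff (by norm_num)).mpr hlam
    _ = a / 2 := by
        rw [ENNReal.ofReal_div_of_pos two_pos, ENNReal.ofReal_one, ENNReal.ofReal_ofNat,
          ENNReal.div_eq_inv_mul (a := a), one_div]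

theorem abs_median_le_rearrangement_general (n : ℕ) (Q : Set (Fin n → ℝ))
    (hQ0 : 0 < volume Q) (hQfin : volume Q < ∞)
    (f : (Fin n → ℝ) → ℝ) (m : ℝ)
    (hm_gt : volume {x | x ∈ Q ∧ m < f x} ≤ volume Q / 2)
    (hm_lt : volume {x | x ∈ Q ∧ f x < m} ≤ volume Q / 2)
    (lam : ℝ) (hlam1 : lam < 1 / 2) :
    ENNReal.ofReal |m| ≤
      rearrangement volume (Q.indicator f) (ENNReal.ofReal lam * volume Q) := by
  have hsub : {x | x ∈ Q ∧ |m| ≤ |f x|} ⊆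
      {x | ENNReal.ofReal |m| ≤ ENNReal.ofReal |Q.indicator f x|} := fun x ⟨hxQ, hx⟩ => by
    simpa only [Set.mem_ofPred_eq, Set.indicator_of_mem hxQ] using ENNReal.ofReal_le_ofReal hx
  apply le_rearrangement_of_lt_measure
  calc ENNReal.ofReal lam * volume Q < volume Q / 2 :=
        ENNReal.ofReal_mul_lt_half hlam1 hQ0.ne' hQfin.ne
    _ ≤ volume {x | x ∈ Q ∧ |m| ≤ |f x|} :=
        half_measure_le_measure_abs_median_le hQfin.ne hm_gt hm_lt
    _ ≤ _ := measure_mono hsub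

/-- if `m` is a median of `f` on `Q`, then for every `0 < λ < 1/2`,
`|m| ≤ (fχ_Q)*(λ|Q|)`. -/
theorem abs_median_le_rearrangement (n : ℕ) (Q : Set (Fin n → ℝ))
    (hQ : MeasurableSet Q) (hQ0 : 0 < volume Q) (hQfin : volume Q < ∞)
    (f : (Fin n → ℝ) → ℝ) (hf : Measurable f) (m : ℝ)
    (hm_gt : volume {x | x ∈ Q ∧ m < f x} ≤ volume Q / 2)
    (hm_lt : volume {x | x ∈ Q ∧ f x < m} ≤ volume Q / 2)
    (lam : ℝ) (hlam0 : 0 < lam) (hlam1 : lam < 1 / 2) :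
    ENNReal.ofReal |m| ≤
      rearrangement volume (Q.indicator f) (ENNReal.ofReal lam * volume Q) :=
  abs_median_le_rearrangement_general n Q hQ0 hQfin f m hm_gt hm_lt lam hlam1
end
end

section
/- Let S be a (1/2)-sparse family of cubes in ℝⁿ and s ≥ 1. If f ∈ L^p with p > s, then the sparse operator A^s_S f(x) = Σ_{Q ∈ S} ⟨f⟩_{s,Q} χ_Q(x) satisfies ‖A^s_S f‖_{L^p} ≤ C(n, p, s) ‖f‖_{L^p}. -/
open MeasureTheory ENNReal

noncomputable section

/-- An axis-parallel cube in ℝⁿ, given by its center and half side length. -/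
structure Cube (n : ℕ) where
  c : Fin n → ℝ
  r : ℝ
  r_pos : 0 < r

/-- The set of points of a cube. -/
def Cube.set {n : ℕ} (Q : Cube n) : Set (Fin n → ℝ) :=
  {x | ∀ i, |x i - Q.c i| ≤ Q.r}

/-- The normalized `L^s` average `⟨f⟩_{s,Q} = ((1/|Q|) ∫_Q |f|^s)^{1/s}` on a cube. -/
def avg (n : ℕ) (s : ℝ) (f : (Fin n → ℝ) → ℂ) (Q : Cube n) : ℝ≥0∞ :=
  ((volume Q.set)⁻¹ * ∫⁻ x in Q.set, (‖f x‖₊ : ℝ≥0∞) ^ s) ^ (1 / s)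

/-- A family `S` of cubes is `η`-sparse if there exist pairwise disjoint measurable
sets `E_Q ⊆ Q` with `|E_Q| ≥ η |Q|` for each `Q ∈ S`. -/
def IsSparse (n : ℕ) (η : ℝ) (S : Set (Cube n)) : Prop :=
  ∃ E : Cube n → Set (Fin n → ℝ),
    (∀ Q ∈ S, E Q ⊆ Q.set ∧ MeasurableSet (E Q) ∧
      ENNReal.ofReal η * volume Q.set ≤ volume (E Q)) ∧
    S.PairwiseDisjoint E

/-- The sparse operator `A^s_S f(x) = Σ_{Q ∈ S} ⟨f⟩_{s,Q} χ_Q(x)`. -/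
def sparseOp (n : ℕ) (s : ℝ) (S : Set (Cube n)) (f : (Fin n → ℝ) → ℂ)
    (x : Fin n → ℝ) : ℝ≥0∞ :=
  ∑' Q : S, avg n s f Q * (Q : Cube n).set.indicator (fun _ => (1 : ℝ≥0∞)) x

/-! Duality. For a finite subfamily put `F = Σ_Q ⟨f⟩_{s,Q} χ_Q` and `g = F^(p-1)`. Then
`∫ F^p = Σ_Q ⟨f⟩_{s,Q} ∫_Q g ≤ η⁻¹ Σ_Q ⟨f⟩_{s,Q} ⟨g⟩_Q |E_Q| ≤ η⁻¹ ∫ (M |f|^s)^(1/s) · M g`,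
because the `E_Q ⊆ Q` are disjoint and both averages over `Q` are dominated on `E_Q` by the
maximal functions. Hölder's inequality and the boundedness of `M` on `L^(p/s)` and `L^(p')`
give `∫ F^p ≤ C ‖f‖_p (∫ F^p)^(1/p')`, i.e. `‖F‖_p ≤ C ‖f‖_p`. The maximal function bound
comes from the Vitali covering lemma (weak type `(1,1)`) and the layer cake formula. A sparse
family is countable, so monotone convergence passes from finite subfamilies to `S`. -/

open Set Metric Filter Module

theorem ENNReal.mul_rpow_sub_one (x : ℝ≥0∞) {p : ℝ} (hp : 1 ≤ p) : x * x ^ (p - 1) = x ^ p := by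
  conv_lhs => enter [1]; rw [← rpow_one x]
  rw [← rpow_add_of_nonneg _ _ zero_le_one (by linarith), add_sub_cancel]

theorem ENNReal.rpow_le_of_le_mul_rpow {a c : ℝ≥0∞} (ha : a ≠ ∞) {p p' : ℝ}
    (hpp' : p.HolderConjugate p') (h : a ≤ c * a ^ (1 / p')) : a ^ (1 / p) ≤ c := by
  rcases eq_or_ne a 0 with rfl | ha0
  · rw [zero_rpow_of_pos hpp'.one_div_pos]
    exact zero_le
  have hsplit : a = a ^ (1 / p) * a ^ (1 / p') := by
    rw [← rpow_add _ _ ha0 ha, hpp'.one_div_add_one_div, div_one, rpow_one]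
  nth_rewrite 1 [hsplit] at h
  exact (ENNReal.mul_le_mul_iff_left (rpow_pos (pos_iff_ne_zero.2 ha0) ha).ne'
    (rpow_ne_top_of_nonneg hpp'.symm.one_div_nonneg ha)).1 h

section MeasureSpace

variable {α ι : Type*} [MeasurableSpace α] {μ : Measure α}

theorem setLIntegral_lt_top_of_lintegral_rpow_ne_top {φ : α → ℝ≥0∞} {s : Set α} (hs : μ s ≠ ∞)
    {q : ℝ} (hq : 1 ≤ q) (hφ : ∫⁻ x, φ x ^ q ∂μ ≠ ∞) : ∫⁻ x in s, φ x ∂μ < ∞ := by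
  have hle (x : α) : φ x ≤ 1 + φ x ^ q := by
    rcases le_total (φ x) 1 with h | h
    · exact h.trans le_self_add
    · calc φ x = φ x ^ (1 : ℝ) := (rpow_one _).symm
        _ ≤ φ x ^ q := rpow_le_rpow_of_exponent_le h hq
        _ ≤ 1 + φ x ^ q := le_add_self
  calc ∫⁻ x in s, φ x ∂μ ≤ ∫⁻ x in s, (1 + φ x ^ q) ∂μ := lintegral_mono hle
    _ ≤ μ s + ∫⁻ x, φ x ^ q ∂μ := by
        rw [lintegral_add_left measurable_const, setLIntegral_const, one_mul]
        exact add_le_add_right (setLIntegral_le_lintegral _ _) _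
    _ < ∞ := add_lt_top.2 ⟨hs.lt_top, hφ.lt_top⟩

theorem lintegral_rpow_eq_ofReal_mul_lintegral_meas_lt {f : α → ℝ≥0∞} (hf : AEMeasurable f μ)
    (hf_fin : ∀ᵐ x ∂μ, f x ≠ ∞) {p : ℝ} (hp : 0 < p) :
    ∫⁻ x, f x ^ p ∂μ = ENNReal.ofReal p *
      ∫⁻ t in Ioi 0, μ {x | ENNReal.ofReal t < f x} * ENNReal.ofReal (t ^ (p - 1)) := by
  have hcake := lintegral_rpow_eq_lintegral_meas_lt_mul μ
    (Eventually.of_forall fun x => toReal_nonneg) hf.ennreal_toReal hp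
  convert hcake using 1
  · refine lintegral_congr_ae ?_
    filter_upwards [hf_fin] with x hx
    rw [← ofReal_rpow_of_nonneg toReal_nonneg hp.le, ofReal_toReal hx]
  · congr 1
    refine setLIntegral_congr_fun measurableSet_Ioi fun t ht => ?_
    congr 1
    refine measure_congr (eventuallyEq_set.2 ?_)
    filter_upwards [hf_fin] with x hx
    exact ofReal_lt_iff_lt_toReal (le_of_lt ht) hx

/-- The layer cake formula for the function `2 * φ` and the measure `φ μ`. -/
theorem two_rpow_mul_lintegral_rpow_add_one {φ : α → ℝ≥0∞} (hφ : Measurable φ)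
    (hφ_fin : ∀ᵐ x ∂μ, φ x ≠ ∞) {r : ℝ} (hr : 0 < r) :
    2 ^ r * ∫⁻ x, φ x ^ (r + 1) ∂μ = ENNReal.ofReal r *
      ∫⁻ t in Ioi 0, (∫⁻ x in {x | ENNReal.ofReal t < 2 * φ x}, φ x ∂μ) *
        ENNReal.ofReal (t ^ (r - 1)) := by
  have h2φ : Measurable fun x => 2 * φ x := hφ.const_mul 2
  have hcake := lintegral_rpow_eq_ofReal_mul_lintegral_meas_lt (μ := μ.withDensity φ)
    h2φ.aemeasurable ((withDensity_absolutelyContinuous μ φ).ae_le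
      (by filter_upwards [hφ_fin] with x hx using mul_ne_top ofNat_ne_top hx)) hr
  simp_rw [withDensity_apply _ (measurableSet_lt measurable_const h2φ)] at hcake
  rw [← hcake, lintegral_withDensity_eq_lintegral_mul _ hφ (h2φ.pow_const _),
    ← lintegral_const_mul' _ _ (rpow_ne_top_of_nonneg hr.le ofNat_ne_top)]
  refine lintegral_congr fun x => ?_
  rw [Pi.mul_apply, mul_rpow_of_nonneg _ _ hr.le, mul_left_comm,
    ← mul_rpow_sub_one _ (by linarith : 1 ≤ r + 1), add_sub_cancel_right]

theorem lintegral_rpow_le_of_meas_lt_le {h φ : α → ℝ≥0∞} (hh : AEMeasurable h μ)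
    (hφ : Measurable φ) (hh_fin : ∀ᵐ x ∂μ, h x ≠ ∞) (hφ_fin : ∀ᵐ x ∂μ, φ x ≠ ∞)
    {C : ℝ≥0∞} {q : ℝ} (hq : 1 < q)
    (hweak : ∀ L : ℝ≥0∞, L ≠ 0 →
      μ {x | L < h x} ≤ C * L⁻¹ * ∫⁻ x in {x | L < 2 * φ x}, φ x ∂μ) :
    ∫⁻ x, h x ^ q ∂μ ≤ C * ENNReal.ofReal (q / (q - 1)) * 2 ^ (q - 1) * ∫⁻ x, φ x ^ q ∂μ := by
  have hq1 : 0 < q - 1 := by linarith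
  have hcake := two_rpow_mul_lintegral_rpow_add_one hφ hφ_fin hq1
  rw [sub_add_cancel] at hcake
  have hmeas : Measurable fun t : ℝ => (∫⁻ x in {x | ENNReal.ofReal t < 2 * φ x}, φ x ∂μ) *
      ENNReal.ofReal (t ^ (q - 1 - 1)) := by
    refine Measurable.mul (Antitone.measurable fun t t' htt' => lintegral_mono_set fun x hx => ?_)
      (by fun_prop)
    exact lt_of_le_of_lt (ofReal_le_ofReal htt') hx
  calc ∫⁻ x, h x ^ q ∂μ
      = ENNReal.ofReal q *
          ∫⁻ t in Ioi 0, μ {x | ENNReal.ofReal t < h x} * ENNReal.ofReal (t ^ (q - 1)) :=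
        lintegral_rpow_eq_ofReal_mul_lintegral_meas_lt hh hh_fin (by linarith)
    _ ≤ ENNReal.ofReal q * ∫⁻ t in Ioi 0, C * ((∫⁻ x in {x | ENNReal.ofReal t < 2 * φ x}, φ x ∂μ) *
          ENNReal.ofReal (t ^ (q - 1 - 1))) := by
        gcongr ENNReal.ofReal q * ?_
        refine setLIntegral_mono' measurableSet_Ioi fun t (ht : 0 < t) => ?_
        have ht' : ENNReal.ofReal t ≠ 0 := (ofReal_pos.2 ht).ne'
        have hpow : ENNReal.ofReal (t ^ (q - 1)) =
            ENNReal.ofReal (t ^ (q - 1 - 1)) * ENNReal.ofReal t := by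
          rw [← ofReal_mul (by positivity), ← Real.rpow_add_one ht.ne', sub_add_cancel]
        rw [hpow]
        calc _ ≤ C * (ENNReal.ofReal t)⁻¹ * (∫⁻ x in {x | ENNReal.ofReal t < 2 * φ x}, φ x ∂μ) *
              (ENNReal.ofReal (t ^ (q - 1 - 1)) * ENNReal.ofReal t) := by
              gcongr
              exact hweak _ ht'
          _ = C * ((∫⁻ x in {x | ENNReal.ofReal t < 2 * φ x}, φ x ∂μ) *
              ENNReal.ofReal (t ^ (q - 1 - 1))) * ((ENNReal.ofReal t)⁻¹ * ENNReal.ofReal t) := by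
              ring
          _ = _ := by rw [ENNReal.inv_mul_cancel ht' ofReal_ne_top, mul_one]
    _ = ENNReal.ofReal q * C * (ENNReal.ofReal (q - 1))⁻¹ * (2 ^ (q - 1) * ∫⁻ x, φ x ^ q ∂μ) := by
        rw [lintegral_const_mul _ hmeas, hcake, ← mul_assoc _ (ENNReal.ofReal (q - 1)),
          mul_assoc (ENNReal.ofReal q * C), ENNReal.inv_mul_cancel (ofReal_pos.2 hq1).ne'
          ofReal_ne_top, mul_one, mul_assoc]
    _ = C * ENNReal.ofReal (q / (q - 1)) * 2 ^ (q - 1) * ∫⁻ x, φ x ^ q ∂μ := by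
        rw [ofReal_div_of_pos hq1, div_eq_mul_inv]
        ring

theorem measure_le_of_lt_setLAverage {s : Set α} (hs : μ s ≠ ∞) {φ : α → ℝ≥0∞}
    (hφ : Measurable φ) {L : ℝ≥0∞} (hL : L ≠ 0) (hLφ : L < ⨍⁻ x in s, φ x ∂μ) :
    μ s ≤ 2 * L⁻¹ * ∫⁻ x in s ∩ {x | L < 2 * φ x}, φ x ∂μ := by
  set A := {x | L < 2 * φ x}
  set J := ∫⁻ x in s ∩ A, φ x ∂μ
  have hL_top : L ≠ ∞ := hLφ.ne_top
  have hs0 : μ s ≠ 0 := fun h => by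
    simp [setLAverage_eq, setLIntegral_measure_zero _ _ h] at hLφ
  have hLs : L * μ s < ∫⁻ x in s, φ x ∂μ := by
    rwa [setLAverage_eq, ENNReal.lt_div_iff_mul_lt (Or.inl hs0) (Or.inl hs)] at hLφ
  -- Off `A` the function is at most `L / 2`, which accounts for at most half of `L * μ s`.
  have hsplit : ∫⁻ x in s, φ x ∂μ ≤ J + L / 2 * μ s := by
    rw [← lintegral_inter_add_sdiff _ _ (measurableSet_lt measurable_const (hφ.const_mul 2))]
    gcongr
    calc ∫⁻ x in s \ A, φ x ∂μ ≤ ∫⁻ _ in s \ A, L / 2 ∂μ := by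
          refine setLIntegral_mono measurable_const fun x hx => ?_
          rw [ENNReal.le_div_iff_mul_le (Or.inl two_ne_zero) (Or.inl ofNat_ne_top), mul_comm]
          exact not_lt.1 hx.2
      _ ≤ L / 2 * μ s := by rw [setLIntegral_const]; gcongr; exact sdiff_subset
  have hhalf : L / 2 * μ s < J := by
    rw [← ENNReal.add_lt_add_iff_right (mul_ne_top (div_ne_top hL_top two_ne_zero) hs),
      ← add_mul, ENNReal.add_halves]
    exact hLs.trans_le hsplit
  have hL2 : L / 2 ≠ 0 := (ENNReal.div_pos hL ofNat_ne_top).ne'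
  rw [← div_eq_mul_inv, ← ENNReal.inv_div (Or.inl ofNat_ne_top) (Or.inl two_ne_zero),
    ← mul_le_iff_le_inv hL2 (div_ne_top hL_top two_ne_zero)]
  exact hhalf.le

theorem lintegral_rpow_tsum_eq_iSup [Countable ι] {u : ι → α → ℝ≥0∞}
    (hu : ∀ i, AEMeasurable (u i) μ) {p : ℝ} (hp : 0 < p) :
    ∫⁻ x, (∑' i, u i x) ^ p ∂μ = ⨆ t : Finset ι, ∫⁻ x, (∑ i ∈ t, u i x) ^ p ∂μ := by
  have hmono : Monotone fun (t : Finset ι) x => (∑ i ∈ t, u i x) ^ p := fun t t' htt' x =>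
    rpow_le_rpow (Finset.sum_le_sum_of_subset htt') hp.le
  rw [← lintegral_iSup_directed (fun t => by fun_prop) hmono.directed_le]
  refine lintegral_congr fun x => ?_
  rw [ENNReal.tsum_eq_iSup_sum]
  exact (orderIsoRpow p hp).map_iSup _

theorem lintegral_sum_mul_indicator_rpow_eq {T : Finset ι} {B : ι → Set α}
    (hB : ∀ i ∈ T, MeasurableSet (B i)) (a : ι → ℝ≥0∞) {p : ℝ} (hp : 1 ≤ p) :
    ∫⁻ x, (∑ i ∈ T, a i * (B i).indicator (fun _ => 1) x) ^ p ∂μ =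
      ∑ i ∈ T, a i * ∫⁻ x in B i, (∑ j ∈ T, a j * (B j).indicator (fun _ => 1) x) ^ (p - 1) ∂μ := by
  set F := fun x => ∑ j ∈ T, a j * (B j).indicator (fun _ => (1 : ℝ≥0∞)) x
  have hF : Measurable fun x => F x ^ (p - 1) :=
    (Finset.measurable_sum _ fun j hj =>
      (measurable_const.indicator (hB j hj)).const_mul _).pow_const _
  calc ∫⁻ x, F x ^ p ∂μ = ∫⁻ x, ∑ i ∈ T, a i * (B i).indicator (fun x => F x ^ (p - 1)) x ∂μ := by
        refine lintegral_congr fun x => ?_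
        rw [← mul_rpow_sub_one _ hp, Finset.sum_mul]
        refine Finset.sum_congr rfl fun i _ => ?_
        by_cases hx : x ∈ B i <;> simp [hx]
    _ = ∑ i ∈ T, a i * ∫⁻ x in B i, F x ^ (p - 1) ∂μ := by
        rw [lintegral_finsetSum _ fun i hi => (hF.indicator (hB i hi)).const_mul _]
        refine Finset.sum_congr rfl fun i hi => ?_
        rw [lintegral_const_mul _ (hF.indicator (hB i hi)), lintegral_indicator (hB i hi)]

theorem sum_mul_setLIntegral_le_of_sparse {T : Finset ι} {B G : ι → Set α} {η : ℝ} (hη : 0 < η)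
    (hB : ∀ i ∈ T, μ (B i) ≠ ∞) (hGm : ∀ i ∈ T, MeasurableSet (G i))
    (hGB : ∀ i ∈ T, ENNReal.ofReal η * μ (B i) ≤ μ (G i)) (hGd : (T : Set ι).PairwiseDisjoint G)
    {a : ι → ℝ≥0∞} {g u v : α → ℝ≥0∞} (hu : ∀ i ∈ T, ∀ x ∈ G i, a i ≤ u x)
    (hv : ∀ i ∈ T, ∀ x ∈ G i, ⨍⁻ y in B i, g y ∂μ ≤ v x) :
    ∑ i ∈ T, a i * ∫⁻ x in B i, g x ∂μ ≤ (ENNReal.ofReal η)⁻¹ * ∫⁻ x, u x * v x ∂μ := by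
  have hη' : ENNReal.ofReal η ≠ 0 := (ofReal_pos.2 hη).ne'
  calc ∑ i ∈ T, a i * ∫⁻ x in B i, g x ∂μ
      = ∑ i ∈ T, a i * ((⨍⁻ y in B i, g y ∂μ) * μ (B i)) := by
        refine Finset.sum_congr rfl fun i hi => ?_
        rw [mul_comm (⨍⁻ _ in _, _ ∂μ), measure_mul_setLAverage _ (hB i hi)]
    _ ≤ ∑ i ∈ T, a i * ((⨍⁻ y in B i, g y ∂μ) * ((ENNReal.ofReal η)⁻¹ * μ (G i))) := by
        gcongr with i hi
        exact (mul_le_iff_le_inv hη' ofReal_ne_top).1 (hGB i hi)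
    _ = (ENNReal.ofReal η)⁻¹ * ∑ i ∈ T, ∫⁻ _ in G i, a i * (⨍⁻ y in B i, g y ∂μ) ∂μ := by
        rw [Finset.mul_sum]
        refine Finset.sum_congr rfl fun i _ => ?_
        rw [setLIntegral_const]
        ring
    _ ≤ (ENNReal.ofReal η)⁻¹ * ∑ i ∈ T, ∫⁻ x in G i, u x * v x ∂μ := by
        refine mul_le_mul_right (Finset.sum_le_sum fun i hi => ?_) _
        exact setLIntegral_mono' (hGm i hi) fun x hx => mul_le_mul' (hu i hi x hx) (hv i hi x hx)
    _ = (ENNReal.ofReal η)⁻¹ * ∫⁻ x in ⋃ i ∈ T, G i, u x * v x ∂μ := by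
        rw [lintegral_biUnion_finset hGd hGm]
    _ ≤ (ENNReal.ofReal η)⁻¹ * ∫⁻ x, u x * v x ∂μ :=
        mul_le_mul_right (setLIntegral_le_lintegral _ _) _

theorem lintegral_sum_mul_indicator_rpow_ne_top {T : Finset ι} {B : ι → Set α}
    (hB : ∀ i ∈ T, MeasurableSet (B i)) (hBμ : ∀ i ∈ T, μ (B i) ≠ ∞) {a : ι → ℝ≥0∞}
    (ha : ∀ i ∈ T, a i ≠ ∞) {p : ℝ} (hp : 0 < p) :
    ∫⁻ x, (∑ i ∈ T, a i * (B i).indicator (fun _ => 1) x) ^ p ∂μ ≠ ∞ := by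
  set U := ⋃ i ∈ T, B i
  have hle (x : α) : (∑ i ∈ T, a i * (B i).indicator (fun _ => 1) x) ^ p ≤
      U.indicator (fun _ => (∑ i ∈ T, a i) ^ p) x := by
    by_cases hx : x ∈ U
    · rw [indicator_of_mem hx]
      gcongr with i
      by_cases hxi : x ∈ B i <;> simp [hxi]
    · have hxB : ∀ i ∈ T, x ∉ B i := fun i hi hxi => hx (mem_biUnion hi hxi)
      rw [indicator_of_notMem hx, Finset.sum_eq_zero fun i hi => by simp [hxB i hi],
        zero_rpow_of_pos hp]
  refine ((lintegral_mono hle).trans_lt ?_).ne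
  rw [lintegral_indicator_const (T.measurableSet_biUnion hB)]
  exact mul_lt_top (rpow_lt_top_of_nonneg hp.le (sum_ne_top.2 ha))
    ((measure_biUnion_finset_le T B).trans_lt (sum_lt_top.2 fun i hi => (hBμ i hi).lt_top))

end MeasureSpace

section FiniteFamily

variable {α ι : Type*} [MeasurableSpace α]

def familyMaximal (μ : Measure α) (T : Finset ι) (B : ι → Set α) (φ : α → ℝ≥0∞) (x : α) :
    ℝ≥0∞ :=
  T.sup fun i => (B i).indicator (fun _ => ⨍⁻ y in B i, φ y ∂μ) x

def sparseSum (μ : Measure α) (T : Finset ι) (B : ι → Set α) (s : ℝ) (ψ : α → ℝ≥0∞) (x : α) :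
    ℝ≥0∞ :=
  ∑ i ∈ T, (⨍⁻ y in B i, ψ y ^ s ∂μ) ^ (1 / s) * (B i).indicator (fun _ => 1) x

variable {μ : Measure α} {T : Finset ι} {B : ι → Set α} {φ : α → ℝ≥0∞}

theorem measurable_familyMaximal (hB : ∀ i ∈ T, MeasurableSet (B i)) :
    Measurable (familyMaximal μ T B φ) := by
  change Measurable fun x => T.sup fun i => (B i).indicator (fun _ => ⨍⁻ y in B i, φ y ∂μ) x
  simp_rw [Finset.sup_eq_iSup]
  exact Measurable.biSup _ T.countable_toSet fun i hi => measurable_const.indicator (hB i hi)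

theorem setLAverage_le_familyMaximal {i : ι} (hi : i ∈ T) {x : α} (hx : x ∈ B i) :
    ⨍⁻ y in B i, φ y ∂μ ≤ familyMaximal μ T B φ x := by
  refine le_trans ?_ (Finset.le_sup (f := fun i => (B i).indicator _ x) hi)
  rw [indicator_of_mem hx]

theorem lt_familyMaximal_iff {x : α} {L : ℝ≥0∞} :
    L < familyMaximal μ T B φ x ↔ ∃ i ∈ T, x ∈ B i ∧ L < ⨍⁻ y in B i, φ y ∂μ := by
  simp only [familyMaximal, Finset.lt_sup_iff]
  refine exists_congr fun i => and_congr_right fun _ => ?_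
  by_cases hx : x ∈ B i <;> simp [hx]

theorem familyMaximal_ne_top (h : ∀ i ∈ T, ⨍⁻ y in B i, φ y ∂μ ≠ ∞) (x : α) :
    familyMaximal μ T B φ x ≠ ∞ := by
  refine (Finset.sup_lt_iff bot_lt_top).2 (fun i hi => ?_) |>.ne
  exact (indicator_le_self _ _ x).trans_lt (h i hi).lt_top

end FiniteFamily

section AddHaar

variable {E ι : Type*} [NormedAddCommGroup E] [NormedSpace ℝ E] [FiniteDimensional ℝ E]
  [MeasurableSpace E] [BorelSpace E] {μ : Measure E} [μ.IsAddHaarMeasure]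
  {T : Finset ι} {B : ι → Set E}

/-- The truncation of the right-hand side to `{L < 2 * φ}` is what lets this weak type `(1, 1)`
bound interpolate to strong type `(q, q)`. -/
theorem meas_lt_familyMaximal_le {c : ι → E} {r : ι → ℝ}
    (hB : ∀ i, B i = closedBall (c i) (r i)) {φ : E → ℝ≥0∞}
    (hφ : Measurable φ) {L : ℝ≥0∞} (hL : L ≠ 0) :
    μ {x | L < familyMaximal μ T B φ x} ≤
      2 * 4 ^ finrank ℝ E * L⁻¹ * ∫⁻ x in {x | L < 2 * φ x}, φ x ∂μ := by
  classical
  obtain rfl : B = fun i => closedBall (c i) (r i) := funext hB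
  set A := {x | L < 2 * φ x}
  have hA : MeasurableSet A := measurableSet_lt measurable_const (hφ.const_mul 2)
  set T' := T.filter fun i => L < ⨍⁻ y in closedBall (c i) (r i), φ y ∂μ
  obtain ⟨R, hR⟩ := (T'.finite_toSet.image r).bddAbove
  obtain ⟨u, huT', hud, hcov⟩ := Vitali.exists_disjoint_subfamily_covering_enlargement_closedBall
    (T' : Set ι) c r R (fun i hi => hR (mem_image_of_mem r hi)) 4 (by norm_num)
  have hu : u.Countable := (T'.finite_toSet.subset huT').countable
  set M := familyMaximal μ T (fun i => closedBall (c i) (r i)) φ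
  have hsub : {x | L < M x} ⊆ ⋃ i ∈ u, closedBall (c i) (4 * r i) := by
    intro x hx
    obtain ⟨i, hi, hxi, hLi⟩ := lt_familyMaximal_iff.1 hx
    obtain ⟨j, hj, hij⟩ := hcov i (by simpa [T'] using ⟨hi, hLi⟩)
    exact mem_biUnion hj (hij hxi)
  calc μ {x | L < M x}
      ≤ ∑' i : u, μ (closedBall (c i) (4 * r i)) :=
        (measure_mono hsub).trans (measure_biUnion_le μ hu _)
    _ = ∑' i : u, 4 ^ finrank ℝ E * μ (closedBall (c i) (r i)) := by
        refine tsum_congr fun i => ?_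
        rw [Measure.addHaar_closedBall_mul_of_pos μ _ four_pos,
          ← Measure.addHaar_closedBall_center μ (c i),
          ofReal_pow zero_le_four, ofReal_ofNat]
    _ ≤ ∑' i : u, 4 ^ finrank ℝ E * (2 * L⁻¹ * ∫⁻ x in closedBall (c i) (r i) ∩ A, φ x ∂μ) := by
        refine ENNReal.tsum_le_tsum fun i => mul_le_mul_right ?_ _
        exact measure_le_of_lt_setLAverage measure_closedBall_lt_top.ne hφ hL
          (Finset.mem_filter.1 (huT' i.2)).2
    _ = 2 * 4 ^ finrank ℝ E * L⁻¹ * ∫⁻ x in ⋃ i ∈ u, closedBall (c i) (r i) ∩ A, φ x ∂μ := by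
        rw [lintegral_biUnion hu (fun i _ => measurableSet_closedBall.inter hA)
          (hud.mono fun i => inter_subset_left), ← ENNReal.tsum_mul_left]
        exact tsum_congr fun i => by ring
    _ ≤ 2 * 4 ^ finrank ℝ E * L⁻¹ * ∫⁻ x in A, φ x ∂μ :=
        mul_le_mul_right (lintegral_mono_set (iUnion₂_subset fun i _ => inter_subset_right)) _

def maximalConst (d : ℕ) (q : ℝ) : ℝ≥0∞ :=
  2 * 4 ^ d * ENNReal.ofReal (q / (q - 1)) * 2 ^ (q - 1)

theorem maximalConst_ne_zero (d : ℕ) {q : ℝ} (hq : 1 < q) : maximalConst d q ≠ 0 := by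
  have : 0 < q / (q - 1) := div_pos (by linarith) (by linarith)
  simp [maximalConst, this]

theorem maximalConst_ne_top (d : ℕ) (q : ℝ) : maximalConst d q ≠ ∞ :=
  mul_ne_top (mul_ne_top (mul_ne_top ofNat_ne_top (pow_ne_top ofNat_ne_top))
    ofReal_ne_top) (rpow_ne_top_of_ne_zero two_ne_zero ofNat_ne_top)

theorem lintegral_familyMaximal_rpow_le {c : ι → E} {r : ι → ℝ}
    (hB : ∀ i, B i = closedBall (c i) (r i)) {φ : E → ℝ≥0∞}
    (hφ : Measurable φ) {q : ℝ} (hq : 1 < q) :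
    ∫⁻ x, familyMaximal μ T B φ x ^ q ∂μ ≤ maximalConst (finrank ℝ E) q * ∫⁻ x, φ x ^ q ∂μ := by
  by_cases hφq : ∫⁻ x, φ x ^ q ∂μ = ∞
  · rw [hφq, mul_top (maximalConst_ne_zero _ hq)]
    exact le_top
  have hBm (i : ι) : MeasurableSet (B i) := hB i ▸ measurableSet_closedBall
  have hBμ (i : ι) : μ (B i) ≠ ∞ := hB i ▸ measure_closedBall_lt_top.ne
  have hφ_fin : ∀ᵐ x ∂μ, φ x ≠ ∞ := by
    filter_upwards [ae_lt_top (hφ.pow_const q) hφq] with x hx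
    exact fun h => by simp [h, zero_lt_one.trans hq] at hx
  have hM_fin := familyMaximal_ne_top (T := T) fun i _ =>
    (setLAverage_lt_top (setLIntegral_lt_top_of_lintegral_rpow_ne_top (hBμ i) hq.le hφq).ne).ne
  exact lintegral_rpow_le_of_meas_lt_le
    (measurable_familyMaximal fun i _ => hBm i).aemeasurable hφ
    (Eventually.of_forall hM_fin) hφ_fin hq fun L hL => meas_lt_familyMaximal_le hB hφ hL

def sparseConst (d : ℕ) (η s p : ℝ) : ℝ≥0∞ :=
  (ENNReal.ofReal η)⁻¹ * maximalConst d (p / s) ^ (1 / p) *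
    maximalConst d p.conjExponent ^ (1 / p.conjExponent)

theorem sparseConst_ne_zero (d : ℕ) (η : ℝ) {s p : ℝ} (hs : 0 < s) (hsp : s < p) (hp : 1 < p) :
    sparseConst d η s p ≠ 0 := by
  have hmax {q : ℝ} (hq : 1 < q) (r : ℝ) : maximalConst d q ^ r ≠ 0 :=
    (rpow_pos (pos_iff_ne_zero.2 (maximalConst_ne_zero d hq)) (maximalConst_ne_top d q)).ne'
  exact mul_ne_zero (mul_ne_zero (ENNReal.inv_ne_zero.2 ofReal_ne_top)
    (hmax ((one_lt_div hs).2 hsp) _)) (hmax (Real.HolderConjugate.conjExponent hp).symm.lt _)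

theorem sparseConst_ne_top (d : ℕ) {η : ℝ} (hη : 0 < η) (s : ℝ) {p : ℝ} (hp : 1 < p) :
    sparseConst d η s p ≠ ∞ := by
  have hpp' := Real.HolderConjugate.conjExponent hp
  exact mul_ne_top (mul_ne_top (inv_ne_top.2 (ofReal_pos.2 hη).ne')
    (rpow_ne_top_of_nonneg hpp'.one_div_nonneg (maximalConst_ne_top _ _)))
    (rpow_ne_top_of_nonneg hpp'.symm.one_div_nonneg (maximalConst_ne_top _ _))

theorem lintegral_sparseSum_rpow_le_mul {c : ι → E} {r : ι → ℝ}
    (hB : ∀ i, B i = closedBall (c i) (r i))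
    {G : ι → Set E} {η : ℝ} (hη : 0 < η)
    (hG : ∀ i ∈ T, G i ⊆ B i ∧ MeasurableSet (G i) ∧ ENNReal.ofReal η * μ (B i) ≤ μ (G i))
    (hGd : (T : Set ι).PairwiseDisjoint G) {ψ : E → ℝ≥0∞} (hψ : Measurable ψ) {s p : ℝ}
    (hs : 0 < s) (hsp : s < p) (hp : 1 < p) :
    ∫⁻ x, sparseSum μ T B s ψ x ^ p ∂μ ≤
      sparseConst (finrank ℝ E) η s p * (∫⁻ x, ψ x ^ p ∂μ) ^ (1 / p) *
        (∫⁻ x, sparseSum μ T B s ψ x ^ p ∂μ) ^ (1 / p.conjExponent) := by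
  set p' := p.conjExponent
  have hpp' : p.HolderConjugate p' := .conjExponent hp
  have hBm (i : ι) : MeasurableSet (B i) := hB i ▸ measurableSet_closedBall
  have hBμ (i : ι) : μ (B i) ≠ ∞ := hB i ▸ measure_closedBall_lt_top.ne
  set φ := fun x => ψ x ^ s
  set F := sparseSum μ T B s ψ
  set M := familyMaximal μ T B
  have hFm : Measurable F :=
    Finset.measurable_sum _ fun i _ => (measurable_const.indicator (hBm i)).const_mul _
  have hM (f : E → ℝ≥0∞) : Measurable (M f) := measurable_familyMaximal fun i _ => hBm i
  have hφp (x : E) : φ x ^ (p / s) = ψ x ^ p := by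
    rw [← rpow_mul, mul_div_cancel₀ _ hs.ne']
  have hFp (x : E) : (F x ^ (p - 1)) ^ p' = F x ^ p := by
    rw [← rpow_mul, hpp'.sub_one_mul_conj]
  have hMφ (x : E) : (M φ x ^ (1 / s)) ^ p = M φ x ^ (p / s) := by
    rw [← rpow_mul, one_div_mul_eq_div]
  calc ∫⁻ x, F x ^ p ∂μ
      = ∑ i ∈ T, (⨍⁻ y in B i, φ y ∂μ) ^ (1 / s) * ∫⁻ x in B i, F x ^ (p - 1) ∂μ :=
        lintegral_sum_mul_indicator_rpow_eq (fun i _ => hBm i) _ hp.le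
    _ ≤ (ENNReal.ofReal η)⁻¹ * ∫⁻ x, M φ x ^ (1 / s) * M (fun y => F y ^ (p - 1)) x ∂μ :=
        sum_mul_setLIntegral_le_of_sparse hη (fun i _ => hBμ i) (fun i hi => (hG i hi).2.1)
          (fun i hi => (hG i hi).2.2) hGd
          (fun i hi x hx => rpow_le_rpow (setLAverage_le_familyMaximal hi ((hG i hi).1 hx))
            (by positivity))
          (fun i hi x hx => setLAverage_le_familyMaximal hi ((hG i hi).1 hx))
    _ ≤ (ENNReal.ofReal η)⁻¹ * ((∫⁻ x, M φ x ^ (p / s) ∂μ) ^ (1 / p) *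
          (∫⁻ x, M (fun y => F y ^ (p - 1)) x ^ p' ∂μ) ^ (1 / p')) := by
        have hHolder := ENNReal.lintegral_mul_le_Lp_mul_Lq μ hpp'
          ((hM φ).pow_const (1 / s)).aemeasurable (hM (fun y => F y ^ (p - 1))).aemeasurable
        simp only [Pi.mul_apply, hMφ] at hHolder
        gcongr
    _ ≤ (ENNReal.ofReal η)⁻¹ * ((maximalConst (finrank ℝ E) (p / s) * ∫⁻ x, ψ x ^ p ∂μ) ^ (1 / p) *
          (maximalConst (finrank ℝ E) p' * ∫⁻ x, F x ^ p ∂μ) ^ (1 / p')) := by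
        refine mul_le_mul_right (mul_le_mul' (rpow_le_rpow ?_ hpp'.one_div_nonneg)
          (rpow_le_rpow ?_ hpp'.symm.one_div_nonneg)) _
        · refine (lintegral_familyMaximal_rpow_le (μ := μ) (T := T) hB (hψ.pow_const s)
            ((one_lt_div hs).2 hsp)).trans_eq ?_
          exact congrArg _ (lintegral_congr hφp)
        · refine (lintegral_familyMaximal_rpow_le (μ := μ) (T := T) hB (hFm.pow_const (p - 1))
            hpp'.symm.lt).trans_eq ?_
          exact congrArg _ (lintegral_congr hFp)
    _ = sparseConst (finrank ℝ E) η s p * (∫⁻ x, ψ x ^ p ∂μ) ^ (1 / p) *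
          (∫⁻ x, F x ^ p ∂μ) ^ (1 / p') := by
        rw [mul_rpow_of_nonneg _ _ hpp'.one_div_nonneg,
          mul_rpow_of_nonneg _ _ hpp'.symm.one_div_nonneg, sparseConst]
        ring

theorem lintegral_sparseSum_rpow_le {c : ι → E} {r : ι → ℝ}
    (hB : ∀ i, B i = closedBall (c i) (r i))
    {G : ι → Set E} {η : ℝ} (hη : 0 < η)
    (hG : ∀ i ∈ T, G i ⊆ B i ∧ MeasurableSet (G i) ∧ ENNReal.ofReal η * μ (B i) ≤ μ (G i))
    (hGd : (T : Set ι).PairwiseDisjoint G) {ψ : E → ℝ≥0∞} (hψ : Measurable ψ) {s p : ℝ}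
    (hs : 0 < s) (hsp : s < p) (hp : 1 < p) :
    (∫⁻ x, sparseSum μ T B s ψ x ^ p ∂μ) ^ (1 / p) ≤
      sparseConst (finrank ℝ E) η s p * (∫⁻ x, ψ x ^ p ∂μ) ^ (1 / p) := by
  by_cases hψp : ∫⁻ x, ψ x ^ p ∂μ = ∞
  · rw [hψp, top_rpow_of_pos (by positivity), mul_top (sparseConst_ne_zero _ _ hs hsp hp)]
    exact le_top
  have hBm (i : ι) : MeasurableSet (B i) := hB i ▸ measurableSet_closedBall
  have hBμ (i : ι) : μ (B i) ≠ ∞ := hB i ▸ measure_closedBall_lt_top.ne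
  have havg (i : ι) : (⨍⁻ y in B i, ψ y ^ s ∂μ) ^ (1 / s) ≠ ∞ := by
    refine rpow_ne_top_of_nonneg (by positivity) (setLAverage_lt_top ?_).ne
    refine (setLIntegral_lt_top_of_lintegral_rpow_ne_top (hBμ i)
      ((one_lt_div hs).2 hsp).le ?_).ne
    simpa only [← rpow_mul, mul_div_cancel₀ _ hs.ne'] using hψp
  exact rpow_le_of_le_mul_rpow (lintegral_sum_mul_indicator_rpow_ne_top (fun i _ => hBm i)
    (fun i _ => hBμ i) (fun i _ => havg i) (by linarith)) (.conjExponent hp)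
    (lintegral_sparseSum_rpow_le_mul hB hη hG hGd hψ hs hsp hp)

end AddHaar

theorem Cube.set_eq_closedBall {n : ℕ} (Q : Cube n) : Q.set = closedBall Q.c Q.r := by
  ext x
  simp only [Cube.set, mem_ofPred_eq, mem_closedBall, dist_eq_norm,
    pi_norm_le_iff_of_nonneg Q.r_pos.le, Pi.sub_apply, Real.norm_eq_abs]

theorem avg_eq_setLAverage (n : ℕ) (s : ℝ) (f : (Fin n → ℝ) → ℂ) (Q : Cube n) :
    avg n s f Q = (⨍⁻ x in Q.set, (‖f x‖₊ : ℝ≥0∞) ^ s ∂volume) ^ (1 / s) := by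
  rw [avg, setLAverage_eq, ENNReal.div_eq_inv_mul]

theorem IsSparse.countable {n : ℕ} {η : ℝ} (hη : 0 < η) {S : Set (Cube n)} (hS : IsSparse n η S) :
    S.Countable := by
  obtain ⟨G, hG, hGd⟩ := hS
  have hpos (Q : S) : 0 < volume (G Q) := by
    refine lt_of_lt_of_le ?_ (hG Q Q.2).2.2
    rw [Cube.set_eq_closedBall]
    exact ENNReal.mul_pos (ofReal_pos.2 hη).ne' (measure_closedBall_pos _ _ Q.1.r_pos).ne'
  have hcount := Measure.countable_meas_pos_of_disjoint_iUnion (μ := volume)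
    (fun Q : S => (hG Q Q.2).2.1) fun Q Q' hne => hGd Q.2 Q'.2 (Subtype.coe_injective.ne hne)
  rw [show {Q : S | 0 < volume (G Q)} = univ from eq_univ_of_forall hpos,
    countable_univ_iff] at hcount
  exact countable_coe_iff.1 hcount

/-- for a `(1/2)`-sparse family `S`, `s ≥ 1` and `p > s`, the sparse
operator `A^s_S` is bounded on `L^p`: `‖A^s_S f‖_{L^p} ≤ C(n,p,s) ‖f‖_{L^p}`. -/
theorem sparseOp_Lp_bound (n : ℕ) (s p : ℝ) (hs : 1 ≤ s) (hsp : s < p) :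
    ∃ C : ℝ≥0∞, 0 < C ∧ C < ∞ ∧
      ∀ (S : Set (Cube n)), IsSparse n (1 / 2) S →
        ∀ f : (Fin n → ℝ) → ℂ, Measurable f → MemLp f (ENNReal.ofReal p) volume →
          (∫⁻ x, sparseOp n s S f x ^ p) ^ (1 / p)
            ≤ C * (∫⁻ x, (‖f x‖₊ : ℝ≥0∞) ^ p) ^ (1 / p) := by
  have hs0 : 0 < s := by linarith
  have hp : 1 < p := by linarith
  refine ⟨sparseConst (finrank ℝ (Fin n → ℝ)) (1 / 2) s p,
    pos_iff_ne_zero.2 (sparseConst_ne_zero _ _ hs0 hsp hp),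
    (sparseConst_ne_top _ one_half_pos _ hp).lt_top, fun S hS f hf _ => ?_⟩
  have : Countable S := (hS.countable one_half_pos).to_subtype
  obtain ⟨G, hG, hGd⟩ := hS
  have hQ (Q : S) : MeasurableSet Q.1.set := Q.1.set_eq_closedBall ▸ measurableSet_closedBall
  simp only [sparseOp]
  rw [lintegral_rpow_tsum_eq_iSup
      (fun Q => ((measurable_const.indicator (hQ Q)).const_mul _).aemeasurable) (by linarith),
    ← orderIsoRpow_apply (1 / p) (by positivity), OrderIso.map_iSup]
  refine iSup_le fun t => ?_
  simp only [orderIsoRpow_apply, avg_eq_setLAverage]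
  exact lintegral_sparseSum_rpow_le (B := fun Q : S => Q.1.set)
    (fun Q => Q.1.set_eq_closedBall) one_half_pos (fun Q _ => hG Q Q.2)
    (fun Q _ Q' _ hne => hGd Q.2 Q'.2 (Subtype.coe_injective.ne hne))
    hf.nnnorm.coe_nnreal_ennreal hs0 hsp hp
end
end

section
/- Let f be a measurable function on Q with median m_f(Q), 0 < δ < 1, and suppose T is sublinear and satisfies ‖T(fχ_Q)‖_{L^{1,∞}(Q)} ≤ |Q| · ‖f‖_{Φ,Q} for a Young function Φ. Then |m_{Tf}(Q)| ≤ c_δ ‖f‖_{Φ,Q} for every median m_{Tf}(Q) of Tf on Q. -/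
/-! If `t < |m|` for a median `m` of `g = T(fχ_Q)`, then `|g| > t` on at least half of `Q`: for
`m ≥ 0` every point not below `m` has `|g| ≥ m > t`, symmetrically for `m < 0`. The weak-type
bound then gives `t |Q| / 2 ≤ |Q| ‖f‖_{Φ,Q}`, so `|m| ≤ 2 ‖f‖_{Φ,Q}`. -/

open MeasureTheory ENNReal

noncomputable section

/-- A Young function: continuous, convex, increasing on `[0,∞)`, `Φ(0) = 0`,
`Φ(t) → ∞` as `t → ∞`. -/
structure YoungFunction where
  toFun : ℝ → ℝ
  zero : toFun 0 = 0
  mono : MonotoneOn toFun (Set.Ici 0)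
  convex : ConvexOn ℝ (Set.Ici 0) toFun
  continuous : ContinuousOn toFun (Set.Ici 0)
  tendsto_atTop : Filter.Tendsto toFun Filter.atTop Filter.atTop

/-- The Luxemburg norm `‖f‖_{Φ,Q} = inf {λ > 0 : (1/|Q|) ∫_Q Φ(|f|/λ) ≤ 1}`. -/
def luxemburgNorm (n : ℕ) (Φ : ℝ → ℝ) (f : (Fin n → ℝ) → ℝ) (Q : Cube n) : ℝ :=
  sInf {lam : ℝ | 0 < lam ∧
    (∫⁻ x in Q.set, ENNReal.ofReal (Φ (|f x| / lam))) ≤ volume Q.set}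

def IsMedianOn {α : Type*} [MeasurableSpace α] (μ : Measure α) (s : Set α) (g : α → ℝ)
    (m : ℝ) : Prop :=
  μ {x | x ∈ s ∧ m < g x} ≤ μ s / 2 ∧ μ {x | x ∈ s ∧ g x < m} ≤ μ s / 2

section Median

variable {α : Type*} [MeasurableSpace α] {μ : Measure α} {s : Set α} {g : α → ℝ} {m : ℝ}

theorem half_le_measure_of_subset_union {a b : Set α} (hs : μ s ≠ ∞) (ha : μ a ≤ μ s / 2)
    (hsub : s ⊆ a ∪ b) : μ s / 2 ≤ μ b := by
  have hhalf : μ s / 2 ≠ ∞ := ENNReal.div_ne_top hs two_ne_zero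
  refine (ENNReal.add_le_add_iff_left hhalf).mp ?_
  calc μ s / 2 + μ s / 2 = μ s := ENNReal.add_halves _
    _ ≤ μ a + μ b := (measure_mono hsub).trans (measure_union_le a b)
    _ ≤ μ s / 2 + μ b := add_le_add_left ha _

theorem IsMedianOn.half_le_measure_lt_abs (hm : IsMedianOn μ s g m) (hs : μ s ≠ ∞) {t : ℝ}
    (ht : t < |m|) : μ s / 2 ≤ μ {x | x ∈ s ∧ t < |g x|} := by
  rcases le_or_gt 0 m with hm0 | hm0
  · rw [abs_of_nonneg hm0] at ht
    refine half_le_measure_of_subset_union hs hm.2 fun x hx => ?_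
    rcases lt_or_ge (g x) m with hgm | hgm
    · exact Or.inl ⟨hx, hgm⟩
    · exact Or.inr ⟨hx, ht.trans_le (hgm.trans (le_abs_self _))⟩
  · rw [abs_of_neg hm0] at ht
    refine half_le_measure_of_subset_union hs hm.1 fun x hx => ?_
    rcases lt_or_ge m (g x) with hgm | hgm
    · exact Or.inl ⟨hx, hgm⟩
    · exact Or.inr ⟨hx, ht.trans_le ((neg_le_neg hgm).trans (neg_le_abs _))⟩

theorem IsMedianOn.abs_le_two_mul_of_weakType (hm : IsMedianOn μ s g m) (hs0 : μ s ≠ 0)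
    (hs : μ s ≠ ∞) {L : ℝ} (hL : 0 ≤ L)
    (hweak : ∀ t : ℝ, 0 < t →
      ENNReal.ofReal t * μ {x | x ∈ s ∧ t < |g x|} ≤ μ s * ENNReal.ofReal L) :
    |m| ≤ 2 * L := by
  refine le_of_forall_lt_imp_le_of_dense fun t ht => ?_
  rcases le_or_gt t 0 with ht0 | ht0
  · linarith
  have key : μ s * ENNReal.ofReal t ≤ μ s * ENNReal.ofReal (2 * L) :=
    calc μ s * ENNReal.ofReal t = 2 * (ENNReal.ofReal t * (μ s / 2)) := by
          rw [mul_comm (ENNReal.ofReal t), ← mul_assoc,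
            ENNReal.mul_div_cancel two_ne_zero ofNat_ne_top]
      _ ≤ 2 * (μ s * ENNReal.ofReal L) := by
          gcongr 2 * ?_
          exact (mul_le_mul_right (hm.half_le_measure_lt_abs hs ht) _).trans (hweak t ht0)
      _ = μ s * ENNReal.ofReal (2 * L) := by
          rw [ENNReal.ofReal_mul zero_le_two, ENNReal.ofReal_ofNat]; ring
  exact (ENNReal.ofReal_le_ofReal_iff (by positivity)).mp
    ((ENNReal.mul_le_mul_iff_right hs0 hs).mp key)

end Median

namespace Cube

variable {n : ℕ} (Q : Cube n)

theorem set_eq_closedBall_s14 : Q.set = Metric.closedBall Q.c Q.r := by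
  ext x
  simp [Cube.set, closedBall_pi _ Q.r_pos.le, Real.dist_eq]

theorem volume_set : volume Q.set = ENNReal.ofReal ((2 * Q.r) ^ n) := by
  rw [Q.set_eq_closedBall_s14, Real.volume_pi_closedBall _ Q.r_pos.le, Fintype.card_fin]

theorem volume_set_ne_zero : volume Q.set ≠ 0 := by
  rw [Q.volume_set, Ne, ENNReal.ofReal_eq_zero, not_le]
  exact pow_pos (mul_pos two_pos Q.r_pos) n

theorem volume_set_ne_top : volume Q.set ≠ ∞ := by
  rw [Q.volume_set]
  exact ofReal_ne_top

end Cube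

theorem luxemburgNorm_nonneg (n : ℕ) (Φ : ℝ → ℝ) (f : (Fin n → ℝ) → ℝ)
    (Q : Cube n) : 0 ≤ luxemburgNorm n Φ f Q :=
  Real.sInf_nonneg fun _ hlam => hlam.1.le

theorem abs_median_le_luxemburgNorm_general (n : ℕ) (Φ : YoungFunction) :
    ∃ c : ℝ, 0 < c ∧
      ∀ (T : ((Fin n → ℝ) → ℝ) → (Fin n → ℝ) → ℝ),
        (∀ (f g : (Fin n → ℝ) → ℝ) (x : Fin n → ℝ),
          |T (f + g) x| ≤ |T f x| + |T g x|) →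
        (∀ (Q : Cube n) (f : (Fin n → ℝ) → ℝ) (t : ℝ), 0 < t →
          ENNReal.ofReal t *
              volume {x | x ∈ Q.set ∧ t < |T (Q.set.indicator f) x|}
            ≤ volume Q.set * ENNReal.ofReal (luxemburgNorm n Φ.toFun f Q)) →
        ∀ (Q : Cube n) (f : (Fin n → ℝ) → ℝ) (m : ℝ),
          volume {x | x ∈ Q.set ∧ m < T (Q.set.indicator f) x} ≤ volume Q.set / 2 →
          volume {x | x ∈ Q.set ∧ T (Q.set.indicator f) x < m} ≤ volume Q.set / 2 →
          |m| ≤ c * luxemburgNorm n Φ.toFun f Q := by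
  refine ⟨2, two_pos, fun T _ hweak Q f m hAbove hBelow => ?_⟩
  have hmedian : IsMedianOn volume Q.set (T (Q.set.indicator f)) m := ⟨hAbove, hBelow⟩
  exact hmedian.abs_le_two_mul_of_weakType Q.volume_set_ne_zero Q.volume_set_ne_top
    (luxemburgNorm_nonneg n Φ.toFun f Q) (hweak Q f)

/-- if `T` is sublinear and `‖T(fχ_Q)‖_{L^{1,∞}(Q)} ≤ |Q| ‖f‖_{Φ,Q}`,
then any median of `T(fχ_Q)` on `Q` satisfies `|m_{Tf}(Q)| ≤ c_δ ‖f‖_{Φ,Q}`. -/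
theorem abs_median_le_luxemburgNorm (n : ℕ) (Φ : YoungFunction)
    (δ : ℝ) (hδ0 : 0 < δ) (hδ1 : δ < 1) :
    ∃ c : ℝ, 0 < c ∧
      ∀ (T : ((Fin n → ℝ) → ℝ) → (Fin n → ℝ) → ℝ),
        (∀ (f g : (Fin n → ℝ) → ℝ) (x : Fin n → ℝ),
          |T (f + g) x| ≤ |T f x| + |T g x|) →
        (∀ (Q : Cube n) (f : (Fin n → ℝ) → ℝ) (t : ℝ), 0 < t →
          ENNReal.ofReal t *
              volume {x | x ∈ Q.set ∧ t < |T (Q.set.indicator f) x|}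
            ≤ volume Q.set * ENNReal.ofReal (luxemburgNorm n Φ.toFun f Q)) →
        ∀ (Q : Cube n) (f : (Fin n → ℝ) → ℝ) (m : ℝ),
          volume {x | x ∈ Q.set ∧ m < T (Q.set.indicator f) x} ≤ volume Q.set / 2 →
          volume {x | x ∈ Q.set ∧ T (Q.set.indicator f) x < m} ≤ volume Q.set / 2 →
          |m| ≤ c * luxemburgNorm n Φ.toFun f Q :=
  abs_median_le_luxemburgNorm_general n Φ
end
end
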